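/- For all u, v ∈ 𝒜_n^*, if u ≡_hypo v then u ∼ v. -/

import Mathlib

/-!
Common setup: words over the alphabet `𝒜_n = {1,…,n}` (modelled as `List ℕ`),
quasi-Kashiwara operators, the quasi-crystal graph, Kashiwara operators,
quasi-ribbon words, and the hypoplactic congruence.
-/

namespace HypoCrystal

noncomputable section
open scoped Classical

/-- `u` is a word over the alphabet `𝒜_n = {1,…,n}`. -/
def IsWord (n : ℕ) (u : List ℕ) : Prop := ∀ a ∈ u, 1 ≤ a ∧ a ≤ n

/-- `u` has an `i`-inversion: some letter `i+1` occurs strictly to the left of some letter `i`. -/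
def HasInv (i : ℕ) (u : List ℕ) : Prop :=
  ∃ v w x : List ℕ, u = v ++ (i + 1) :: w ++ i :: x

/-- Replace the first (leftmost) occurrence of `a` by `b`, if any; otherwise `none`. -/
def replaceFirst (a b : ℕ) : List ℕ → Option (List ℕ)
  | [] => none
  | x :: xs => if x = a then some (b :: xs) else (replaceFirst a b xs).map (x :: ·)

/-- The quasi-Kashiwara raising operator `e_i` (partial map, `none` = undefined):
if `u` has an `i`-inversion it is undefined; otherwise it replaces the leftmost
letter `i+1` by `i` (undefined if there is no letter `i+1`). -/
def qe (i : ℕ) (u : List ℕ) : Option (List ℕ) :=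
  if HasInv i u then none else replaceFirst (i + 1) i u

/-- The quasi-Kashiwara lowering operator `f_i` (partial map, `none` = undefined):
if `u` has an `i`-inversion it is undefined; otherwise it replaces the rightmost
letter `i` by `i+1` (undefined if there is no letter `i`). -/
def qf (i : ℕ) (u : List ℕ) : Option (List ℕ) :=
  if HasInv i u then none else (replaceFirst i (i + 1) u.reverse).map List.reverse

/-- Weight of a word: `wt u a` is the number of occurrences of the letter `a` in `u`. -/
def wt (u : List ℕ) : ℕ → ℕ := fun a => u.count a

/-- There is an edge labelled `i` from `u` to `v` in the quasi-crystal graph `Γ(hypo_n)`. -/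
def Edge (n i : ℕ) (u v : List ℕ) : Prop := 1 ≤ i ∧ i < n ∧ qf i u = some v

/-- `u` and `v` are adjacent (in the underlying undirected graph) in `Γ(hypo_n)`. -/
def Adj (n : ℕ) (u v : List ℕ) : Prop := ∃ i, Edge n i u v ∨ Edge n i v u

/-- `v` lies in the connected component `Γ(hypo_n, u)` of `u` in the quasi-crystal graph. -/
def SameComp (n : ℕ) : List ℕ → List ℕ → Prop := Relation.ReflTransGen (Adj n)

/-- `u` is a highest-weight word: no raising operator `e_i` is defined on `u`. -/
def HighestWeight (n : ℕ) (u : List ℕ) : Prop := ∀ i, 1 ≤ i → i < n → qe i u = none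

/-- `θ` is a quasi-crystal isomorphism from the component of `u` onto the component of `v`:
a weight-preserving bijection preserving labelled edges in both directions. -/
def IsQCIso (n : ℕ) (u v : List ℕ) (θ : List ℕ → List ℕ) : Prop :=
  Set.BijOn θ {x | SameComp n u x} {y | SameComp n v y} ∧
  (∀ x, SameComp n u x → wt (θ x) = wt x) ∧
  (∀ x y, SameComp n u x → SameComp n u y → ∀ i, (Edge n i x y ↔ Edge n i (θ x) (θ y)))

/-- `u ∼ v`: there is a quasi-crystal isomorphism between the components of `u` and `v`
taking `u` to `v`. -/
def Sim (n : ℕ) (u v : List ℕ) : Prop :=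
  ∃ θ : List ℕ → List ℕ, IsQCIso n u v θ ∧ θ u = v

/-- The standardization of `u`: position `k` receives the rank (starting at 1) of the
pair `(u_k, k)` among all pairs `(u_l, l)` ordered lexicographically. -/
def std (u : List ℕ) : List ℕ :=
  (List.range u.length).map fun k =>
    1 + ((List.range u.length).filter fun l =>
      u.getD l 0 < u.getD k 0 ∨ (u.getD l 0 = u.getD k 0 ∧ l < k)).length

/-- The maximal strictly decreasing factors of a word (the columns of its
quasi-ribbon tabloid, each read bottom-to-top). -/
def decFactors : List ℕ → List (List ℕ)
  | [] => []
  | a :: rest =>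
    match decFactors rest with
    | (b :: f) :: fs => if b < a then (a :: b :: f) :: fs else [a] :: (b :: f) :: fs
    | l => [a] :: l

/-- `w` is a quasi-ribbon word: its quasi-ribbon tabloid is a quasi-ribbon tableau,
i.e. the bottom entry of each column is ≤ the top entry of the next column. -/
def IsQRWord (w : List ℕ) : Prop :=
  (decFactors w).Chain' fun c d => c.headD 0 ≤ d.getLastD 0

/-- Row lengths (top to bottom) of the ribbon diagram whose column heights
(left to right) are given. -/
def rowLengths : List ℕ → List ℕ
  | [] => []
  | [d] => List.replicate d 1
  | d :: e :: rest =>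
    List.replicate (d - 1) 1 ++
      (match rowLengths (e :: rest) with
       | [] => [1]
       | r :: rs => (r + 1) :: rs)

/-- The shape (as a composition, listed top row first) of the quasi-ribbon tabloid of `w`. -/
def shape (w : List ℕ) : List ℕ := rowLengths ((decFactors w).map List.length)

/-- Columns of the quasi-ribbon tableau of shape `α` whose `j`-th row consists
entirely of symbols `j`, where rows are labelled starting from `j₀`. -/
def hwCols : List ℕ → ℕ → List (List ℕ)
  | [], _ => []
  | [a], j => List.replicate a [j]
  | a :: b :: rest, j =>
    List.replicate (a - 1) [j] ++
      (match hwCols (b :: rest) (j + 1) with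
       | [] => [[j]]
       | c :: cs => (c ++ [j]) :: cs)

/-- The column reading of the quasi-ribbon tableau of shape `α` whose `j`-th row
consists entirely of symbols `j`. -/
def hwQR (α : List ℕ) : List ℕ := (hwCols α 1).flatten

/-- The defining relations `R_hypo` of the hypoplactic monoid of rank `n`. -/
inductive HypoRel (n : ℕ) : List ℕ → List ℕ → Prop
  | knuth1 {a b c : ℕ} : 1 ≤ a → a ≤ b → b < c → c ≤ n → HypoRel n [a, c, b] [c, a, b]
  | knuth2 {a b c : ℕ} : 1 ≤ a → a < b → b ≤ c → c ≤ n → HypoRel n [b, a, c] [b, c, a]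
  | quasi1 {a b c d : ℕ} : 1 ≤ a → a ≤ b → b < c → c ≤ d → d ≤ n →
      HypoRel n [c, a, d, b] [a, c, b, d]
  | quasi2 {a b c d : ℕ} : 1 ≤ a → a < b → b ≤ c → c < d → d ≤ n →
      HypoRel n [b, d, a, c] [d, b, c, a]

/-- The hypoplactic congruence `≡_hypo`: the congruence on the free monoid generated
by the relations `R_hypo`. -/
inductive HypoCong (n : ℕ) : List ℕ → List ℕ → Prop
  | of {u v} : HypoRel n u v → HypoCong n u v
  | refl (u) : HypoCong n u u
  | symm {u v} : HypoCong n u v → HypoCong n v u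
  | trans {u v w} : HypoCong n u v → HypoCong n v w → HypoCong n u w
  | append {u v u' v'} : HypoCong n u v → HypoCong n u' v' →
      HypoCong n (u ++ u') (v ++ v')

/-- The signature word of `u` for index `i`: each letter `i` becomes `(position, true)`
(that is, `+`) and each letter `i+1` becomes `(position, false)` (that is, `−`). -/
def signWord (i : ℕ) (u : List ℕ) : List (ℕ × Bool) :=
  (u.zipIdx.map Prod.swap).filterMap fun pa =>
    if pa.2 = i then some (pa.1, true)
    else if pa.2 = i + 1 then some (pa.1, false) else none

/-- Iteratively delete factors `−+` from a signature word, producing the reduced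
word `+^p −^q`. -/
def reduce : List (ℕ × Bool) → List (ℕ × Bool)
  | [] => []
  | x :: rest =>
    match reduce rest with
    | y :: rest' => if x.2 = false ∧ y.2 = true then rest' else x :: y :: rest'
    | [] => [x]

/-- The Kashiwara raising operator `ẽ_i`, computed by the signature rule: change to `i`
the letter `i+1` corresponding to the leftmost `−` of the reduced signature word. -/
def KE (i : ℕ) (u : List ℕ) : Option (List ℕ) :=
  (((reduce (signWord i u)).filter fun x => !x.2).head?).map fun x => u.set x.1 i

/-- The Kashiwara lowering operator `f̃_i`, computed by the signature rule: change to `i+1`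
the letter `i` corresponding to the rightmost `+` of the reduced signature word. -/
def KF (i : ℕ) (u : List ℕ) : Option (List ℕ) :=
  (((reduce (signWord i u)).filter fun x => x.2).getLast?).map fun x => u.set x.1 (i + 1)

/-- The Schützenberger involution on `𝒜_n^*`: reverse the word and replace each
letter `a` by `n − a + 1`. -/
def sharp (n : ℕ) (u : List ℕ) : List ℕ := u.reverse.map fun a => n + 1 - a

/-- The largest letter occurring in `u` (0 for the empty word). -/
def maxLetter (u : List ℕ) : ℕ := u.foldr max 0

/-- `β` is coarser than `α` (`β ⪯ α`): they have the same weight and every proper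
partial sum of `β` is a proper partial sum of `α`. -/
def Coarser (β α : List ℕ) : Prop :=
  β.sum = α.sum ∧ ∀ p < β.length, ∃ m < α.length, (β.take p).sum = (α.take m).sum

end
end HypoCrystal

/-!
An edge of `Γ(hypo_n)` changes a single letter without changing the standardization, so the
component of `u` consists of words with the standardization of `u`, and such a word is
determined by its letters. Each defining relation `(u, v)` of `≡_hypo` permutes positions, and
permuting the same positions in any word `x` with the standardization of `u` yields a word with
the standardization of `v`, the same letters and the same `i`-inversions, on which the
quasi-Kashiwara operators therefore act in the same way. This transfer property survives
concatenation and composition, hence holds whenever `u ≡_hypo v`, and the transfer map is the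
required quasi-crystal isomorphism.
-/

namespace HypoCrystal

open List

def SameOrder (p q : ℕ × ℕ) : Prop := (p.1 ≤ q.1 ↔ p.2 ≤ q.2)

/-- Equivalently, `std x = std u`. -/
def SamePattern (x u : List ℕ) : Prop := x.length = u.length ∧ (x.zip u).Pairwise SameOrder

lemma zip_self_eq_map (l : List ℕ) : l.zip l = l.map fun a => (a, a) := by
  induction l <;> simp_all

namespace SamePattern

variable {x u w : List ℕ}

lemma refl (x : List ℕ) : SamePattern x x :=
  ⟨rfl, by rw [zip_self_eq_map, pairwise_map]; exact pairwise_of_forall fun _ _ => Iff.rfl⟩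

lemma symm (h : SamePattern x u) : SamePattern u x :=
  ⟨h.1.symm, by rw [← zip_swap, pairwise_map]; exact h.2.imp Iff.symm⟩

lemma trans (h₁ : SamePattern x w) (h₂ : SamePattern w u) : SamePattern x u := by
  obtain ⟨hl₁, h₁⟩ := h₁
  obtain ⟨hl₂, h₂⟩ := h₂
  refine ⟨hl₁.trans hl₂, pairwise_iff_getElem.mpr fun p q hp hq hpq => ?_⟩
  simp only [length_zip] at hp hq
  have e₁ := pairwise_iff_getElem.mp h₁ p q (by rw [length_zip]; omega) (by rw [length_zip]; omega) hpq
  have e₂ := pairwise_iff_getElem.mp h₂ p q (by rw [length_zip]; omega) (by rw [length_zip]; omega) hpq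
  simp only [SameOrder, getElem_zip] at e₁ e₂ ⊢
  exact e₁.trans e₂

end SamePattern

lemma samePattern_append_iff {x₁ x₂ u₁ u₂ : List ℕ} (h : x₁.length = u₁.length) :
    SamePattern (x₁ ++ x₂) (u₁ ++ u₂) ↔ SamePattern x₁ u₁ ∧ SamePattern x₂ u₂ ∧
      ∀ a ∈ x₁.zip u₁, ∀ b ∈ x₂.zip u₂, SameOrder a b := by
  simp only [SamePattern, zip_append h, pairwise_append, length_append, h, Nat.add_left_cancel_iff]
  tauto

lemma countP_eq_of_forall_mem_zip {y z : List ℕ} {P Q : ℕ → Bool} (hlen : y.length = z.length)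
    (h : ∀ p ∈ y.zip z, (P p.1 ↔ Q p.2)) : y.countP P = z.countP Q :=
  calc y.countP P = (y.zip z).countP (P ∘ Prod.fst) := by rw [← countP_map, map_fst_zip hlen.le]
    _ = (y.zip z).countP (Q ∘ Prod.snd) := countP_congr fun p hp => by simpa using h p hp
    _ = z.countP Q := by rw [← countP_map, map_snd_zip hlen.ge]

lemma le_head_of_samePattern_of_perm {a b : ℕ} {y z : List ℕ} (hpat : SamePattern (a :: y) (b :: z))
    (hperm : (a :: y).Perm (b :: z)) : b ≤ a := by
  -- for `a < b` the pattern gives `#{≥ a in a :: y} = #{≥ b in b :: z} = #{≥ b in a :: y}`,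
  -- yet `a` itself is counted only on the left
  by_contra! hab
  obtain ⟨hlen, hpw⟩ := hpat
  simp only [zip_cons_cons, pairwise_cons, SameOrder] at hpw
  have hcount : y.countP (a ≤ ·) = z.countP (b ≤ ·) :=
    countP_eq_of_forall_mem_zip (by simpa using hlen) fun p hp => by simpa using hpw.1 p hp
  have hmono : y.countP (b ≤ ·) ≤ y.countP (a ≤ ·) :=
    countP_mono_left fun c _ => by simp only [decide_eq_true_eq]; omega
  have := hperm.countP_eq (b ≤ ·)
  simp only [countP_cons, le_refl, decide_true, if_true, decide_eq_true_eq] at this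
  rw [if_neg (by omega)] at this
  omega

lemma eq_of_samePattern_of_perm : ∀ {y z : List ℕ}, SamePattern y z → y.Perm z → y = z
  | [], [], _, _ => rfl
  | [], _ :: _, h, _ | _ :: _, [], h, _ => absurd h.1 (by simp)
  | a :: y, b :: z, hpat, hperm => by
    obtain rfl : a = b := le_antisymm (le_head_of_samePattern_of_perm hpat.symm hperm.symm)
      (le_head_of_samePattern_of_perm hpat hperm)
    have htail : SamePattern y z := by
      obtain ⟨hlen, hpw⟩ := hpat
      simp only [zip_cons_cons, pairwise_cons] at hpw
      exact ⟨by simpa using hlen, hpw.2⟩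
    rw [eq_of_samePattern_of_perm htail ((perm_cons a).mp hperm)]

lemma hasInv_iff_sublist {i : ℕ} {u : List ℕ} : HasInv i u ↔ [i + 1, i] <+ u := by
  constructor
  · rintro ⟨v, w, x, rfl⟩
    simp
  · intro h
    obtain ⟨r₁, r₂, rfl, h₁, h₂⟩ := cons_sublist_iff.mp h
    obtain ⟨v, w, rfl⟩ := append_of_mem h₁
    obtain ⟨s, x, rfl⟩ := append_of_mem (singleton_sublist.mp h₂)
    exact ⟨v, w ++ s, x, by simp⟩

lemma not_hasInv_iff {i : ℕ} {u : List ℕ} :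
    ¬ HasInv i u ↔ u.Pairwise fun a b => ¬ (a = i + 1 ∧ b = i) := by
  rw [hasInv_iff_sublist, pairwise_iff_forall_sublist]
  constructor
  · rintro h a b hab ⟨rfl, rfl⟩
    exact h hab
  · intro h hsub
    exact h hsub ⟨rfl, rfl⟩

lemma hasInv_append {i : ℕ} {x₁ x₂ : List ℕ} :
    HasInv i (x₁ ++ x₂) ↔ HasInv i x₁ ∨ HasInv i x₂ ∨ (i + 1 ∈ x₁ ∧ i ∈ x₂) := by
  rw [← not_iff_not, not_hasInv_iff, pairwise_append, ← not_hasInv_iff, ← not_hasInv_iff]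
  grind

lemma replaceFirst_eq_none_iff {a b : ℕ} {l : List ℕ} : replaceFirst a b l = none ↔ a ∉ l := by
  induction l with
  | nil => simp [replaceFirst]
  | cons x xs ih =>
    by_cases hx : x = a
    · simp [replaceFirst, hx]
    · simp [replaceFirst, hx, ih, Ne.symm hx]

lemma replaceFirst_eq_some {a b : ℕ} {l r : List ℕ} (h : replaceFirst a b l = some r) :
    ∃ s t, l = s ++ a :: t ∧ a ∉ s ∧ r = s ++ b :: t := by
  induction l generalizing r with
  | nil => simp [replaceFirst] at h
  | cons x xs ih =>
    by_cases hx : x = a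
    · simp only [replaceFirst, hx, if_true, Option.some.injEq] at h
      exact ⟨[], xs, by rw [hx]; rfl, not_mem_nil, by rw [← h]; rfl⟩
    · simp only [replaceFirst, if_neg hx, Option.map_eq_some_iff] at h
      obtain ⟨r', hr', rfl⟩ := h
      obtain ⟨s, t, rfl, hs, rfl⟩ := ih hr'
      exact ⟨x :: s, t, rfl, by simp [Ne.symm hx, hs], rfl⟩

lemma qf_eq_some {i : ℕ} {x y : List ℕ} (h : qf i x = some y) :
    ¬ HasInv i x ∧ ∃ x₁ x₂, x = x₁ ++ i :: x₂ ∧ i ∉ x₂ ∧ y = x₁ ++ (i + 1) :: x₂ := by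
  rw [qf] at h
  split_ifs at h with hinv
  obtain ⟨r, hr, rfl⟩ := Option.map_eq_some_iff.mp h
  obtain ⟨s, t, hst, hs, rfl⟩ := replaceFirst_eq_some hr
  refine ⟨hinv, t.reverse, s.reverse, ?_, by simpa using hs, by simp⟩
  simpa using congrArg reverse hst

lemma exists_qf_eq_some {i : ℕ} {x : List ℕ} (hinv : ¬ HasInv i x) (hmem : i ∈ x) :
    ∃ y, qf i x = some y := by
  obtain ⟨r, hr⟩ := Option.ne_none_iff_exists'.mp
    (replaceFirst_eq_none_iff.not.mpr (not_not.mpr (mem_reverse.mpr hmem)))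
  exact ⟨r.reverse, by rw [qf, if_neg hinv, hr]; rfl⟩

lemma samePattern_qf {i : ℕ} {x y : List ℕ} (h : qf i x = some y) : SamePattern y x := by
  obtain ⟨hinv, x₁, x₂, rfl, hi, rfl⟩ := qf_eq_some h
  rw [not_hasInv_iff, pairwise_append] at hinv
  refine (samePattern_append_iff rfl).mpr ⟨.refl x₁, ⟨by simp, ?_⟩, ?_⟩
  · simp only [zip_cons_cons, pairwise_cons, zip_self_eq_map, pairwise_map, mem_map]
    refine ⟨?_, pairwise_of_forall fun _ _ => Iff.rfl⟩
    rintro _ ⟨c, hc, rfl⟩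
    have : c ≠ i := fun hci => hi (hci ▸ hc)
    simp only [SameOrder]
    omega
  · simp only [zip_self_eq_map, mem_map, zip_cons_cons, mem_cons]
    rintro _ ⟨c, hc, rfl⟩ _ (rfl | ⟨d, hd, rfl⟩)
    · have : c ≠ i + 1 := fun hci => hinv.2.2 c hc i mem_cons_self ⟨hci, rfl⟩
      simp only [SameOrder]
      omega
    · exact Iff.rfl

lemma perm_of_qf {i : ℕ} {x x' y y' : List ℕ} (hx : x.Perm x') (h : qf i x = some y)
    (h' : qf i x' = some y') : y.Perm y' := by
  obtain ⟨-, x₁, x₂, rfl, -, rfl⟩ := qf_eq_some h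
  obtain ⟨-, x₁', x₂', rfl, -, rfl⟩ := qf_eq_some h'
  have : (x₁ ++ x₂).Perm (x₁' ++ x₂') :=
    (perm_cons i).mp (perm_middle.symm.trans (hx.trans perm_middle))
  exact perm_middle.trans ((this.cons (i + 1)).trans perm_middle.symm)

lemma perm_of_perm_zip {x u x' v : List ℕ} (hx : x.length = u.length) (hx' : x'.length = v.length)
    (h : (x.zip u).Perm (x'.zip v)) : x.Perm x' ∧ u.Perm v := by
  have h₁ := h.map Prod.fst
  have h₂ := h.map Prod.snd
  rw [map_fst_zip hx.le, map_fst_zip hx'.le] at h₁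
  rw [map_snd_zip hx.ge, map_snd_zip hx'.ge] at h₂
  exact ⟨h₁, h₂⟩

/-- Recording the pairs `x.zip u`, not just the letters of `x`, is what makes this notion
compatible with concatenation. -/
def Transfers (u v : List ℕ) : Prop :=
  ∀ x, SamePattern x u → ∃ x', SamePattern x' v ∧ (x.zip u).Perm (x'.zip v) ∧
    ∀ i, HasInv i x ↔ HasInv i x'

namespace Transfers

variable {u v w u₂ v₂ x : List ℕ}

lemma refl (u : List ℕ) : Transfers u u :=
  fun x hx => ⟨x, hx, .refl _, fun _ => Iff.rfl⟩

lemma trans (h₁ : Transfers u v) (h₂ : Transfers v w) : Transfers u w := by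
  intro x hx
  obtain ⟨x', hx', hz, hi⟩ := h₁ x hx
  obtain ⟨x'', hx'', hz', hi'⟩ := h₂ x' hx'
  exact ⟨x'', hx'', hz.trans hz', fun i => (hi i).trans (hi' i)⟩

lemma append (h₁ : Transfers u v) (h₂ : Transfers u₂ v₂) : Transfers (u ++ u₂) (v ++ v₂) := by
  intro x hx
  obtain ⟨x₁, x₂, rfl, hlen⟩ : ∃ x₁ x₂, x = x₁ ++ x₂ ∧ x₁.length = u.length := by
    refine ⟨x.take u.length, x.drop u.length, (take_append_drop _ _).symm, ?_⟩
    have := hx.1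
    simp only [length_append] at this
    simp only [length_take]
    omega
  obtain ⟨hp₁, hp₂, hcross⟩ := (samePattern_append_iff hlen).mp hx
  obtain ⟨y₁, hq₁, hz₁, hi₁⟩ := h₁ x₁ hp₁
  obtain ⟨y₂, hq₂, hz₂, hi₂⟩ := h₂ x₂ hp₂
  have hperm₁ := (perm_of_perm_zip hp₁.1 hq₁.1 hz₁).1
  have hperm₂ := (perm_of_perm_zip hp₂.1 hq₂.1 hz₂).1
  refine ⟨y₁ ++ y₂, (samePattern_append_iff hq₁.1).mpr ⟨hq₁, hq₂, fun a ha b hb =>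
    hcross a (hz₁.mem_iff.mpr ha) b (hz₂.mem_iff.mpr hb)⟩, ?_, fun i => ?_⟩
  · rw [zip_append hlen, zip_append hq₁.1]
    exact hz₁.append hz₂
  · rw [hasInv_append, hasInv_append, hi₁, hi₂, hperm₁.mem_iff, hperm₂.mem_iff]

lemma perm (h : Transfers u v) : u.Perm v := by
  obtain ⟨u', hu', hz, -⟩ := h u (.refl u)
  exact (perm_of_perm_zip rfl hu'.1 hz).2

lemma exists_partner (h : Transfers u v) (hx : SamePattern x u) :
    ∃ x', SamePattern x' v ∧ x.Perm x' ∧ ∀ i, HasInv i x ↔ HasInv i x' := by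
  obtain ⟨x', hx', hz, hi⟩ := h x hx
  exact ⟨x', hx', (perm_of_perm_zip hx.1 hx'.1 hz).1, hi⟩

end Transfers

open Classical in
noncomputable def repattern (v x : List ℕ) : List ℕ :=
  if h : ∃ x', SamePattern x' v ∧ x.Perm x' then h.choose else x

section Repattern

variable {n i : ℕ} {u v x y z : List ℕ}

lemma repattern_eq (hz : SamePattern z v) (hxz : x.Perm z) : repattern v x = z := by
  have h : ∃ x', SamePattern x' v ∧ x.Perm x' := ⟨z, hz, hxz⟩
  obtain ⟨h₁, h₂⟩ := h.choose_spec
  rw [repattern, dif_pos h]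
  exact eq_of_samePattern_of_perm (h₁.trans hz.symm) (h₂.symm.trans hxz)

lemma Transfers.repattern_spec (h : Transfers u v) (hx : SamePattern x u) :
    SamePattern (repattern v x) v ∧ x.Perm (repattern v x) ∧
      ∀ i, HasInv i x ↔ HasInv i (repattern v x) := by
  obtain ⟨x', hx', hperm, hi⟩ := h.exists_partner hx
  rw [repattern_eq hx' hperm]
  exact ⟨hx', hperm, hi⟩

lemma Transfers.repattern_repattern (h : Transfers u v) (hx : SamePattern x u) :
    repattern u (repattern v x) = x :=
  repattern_eq hx (h.repattern_spec hx).2.1.symm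

lemma Transfers.qf_repattern (h : Transfers u v) (hx : SamePattern x u)
    (hxy : qf i x = some y) : qf i (repattern v x) = some (repattern v y) := by
  obtain ⟨hx', hperm, hi⟩ := h.repattern_spec hx
  obtain ⟨hninv, x₁, x₂, rfl, -, -⟩ := qf_eq_some hxy
  obtain ⟨y', hy'⟩ := exists_qf_eq_some (mt (hi i).mpr hninv) (hperm.subset mem_append_cons_self)
  rw [hy', repattern_eq ((samePattern_qf hy').trans hx') (perm_of_qf hperm hxy hy')]

lemma Transfers.edge_repattern (h : Transfers u v) (hx : SamePattern x u)
    (he : Edge n i x y) : Edge n i (repattern v x) (repattern v y) :=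
  ⟨he.1, he.2.1, h.qf_repattern hx he.2.2⟩

lemma samePattern_of_sameComp (h : SameComp n u x) : SamePattern x u := by
  induction h with
  | refl => exact .refl u
  | tail _ hadj ih =>
    obtain ⟨i, he | he⟩ := hadj
    · exact (samePattern_qf he.2.2).trans ih
    · exact (samePattern_qf he.2.2).symm.trans ih

lemma Transfers.sameComp_repattern (h : Transfers u v) (hx : SameComp n u x) :
    SameComp n v (repattern v x) := by
  induction hx with
  | refl => rw [repattern_eq (.refl v) h.perm]; exact .refl
  | tail hub hadj ih =>
    obtain ⟨i, he | he⟩ := hadj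
    · exact ih.tail ⟨i, .inl (h.edge_repattern (samePattern_of_sameComp hub) he)⟩
    · have hc := samePattern_of_sameComp (hub.tail ⟨i, .inr he⟩)
      exact ih.tail ⟨i, .inr (h.edge_repattern hc he)⟩

theorem sim_of_transfers (huv : Transfers u v) (hvu : Transfers v u) : Sim n u v := by
  have hpat {x} (hx : SameComp n u x) := samePattern_of_sameComp hx
  refine ⟨repattern v, ⟨?_, fun x hx => ?_, fun x y hx hy i => ⟨huv.edge_repattern (hpat hx), ?_⟩⟩,
    repattern_eq (.refl v) huv.perm⟩
  · exact Set.InvOn.bijOn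
      ⟨fun x hx => huv.repattern_repattern (hpat hx),
        fun y hy => hvu.repattern_repattern (samePattern_of_sameComp hy)⟩
      (fun x hx => huv.sameComp_repattern hx) (fun y hy => hvu.sameComp_repattern hy)
  · funext a
    exact ((huv.repattern_spec (hpat hx)).2.1.count_eq a).symm
  · intro he
    have := hvu.edge_repattern (huv.repattern_spec (hpat hx)).1 he
    rwa [huv.repattern_repattern (hpat hx), huv.repattern_repattern (hpat hy)] at this

end Repattern

lemma transfers_of_hypoRel {n : ℕ} {u v : List ℕ} (h : HypoRel n u v) :
    Transfers u v ∧ Transfers v u := by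
  cases h with
  | knuth1 =>
    refine ⟨fun x ⟨hlen, hx⟩ => ?_, fun x ⟨hlen, hx⟩ => ?_⟩ <;>
    · obtain ⟨X, Y, Z, rfl⟩ := length_eq_three.mp (by simpa using hlen)
      refine ⟨[Y, X, Z], ⟨rfl, ?_⟩, .swap _ _ _, fun i => not_iff_not.mp ?_⟩
      all_goals
        simp only [SameOrder, not_hasInv_iff, zip_cons_cons, zip_nil_right, pairwise_cons,
          Pairwise.nil, mem_cons, not_mem_nil, forall_eq_or_imp] at hx ⊢
        grind
  | knuth2 =>
    refine ⟨fun x ⟨hlen, hx⟩ => ?_, fun x ⟨hlen, hx⟩ => ?_⟩ <;>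
    · obtain ⟨X, Y, Z, rfl⟩ := length_eq_three.mp (by simpa using hlen)
      refine ⟨[X, Z, Y], ⟨rfl, ?_⟩, (Perm.swap _ _ _).cons _, fun i => not_iff_not.mp ?_⟩
      all_goals
        simp only [SameOrder, not_hasInv_iff, zip_cons_cons, zip_nil_right, pairwise_cons,
          Pairwise.nil, mem_cons, not_mem_nil, forall_eq_or_imp] at hx ⊢
        grind
  | quasi1 | quasi2 =>
    refine ⟨fun x ⟨hlen, hx⟩ => ?_, fun x ⟨hlen, hx⟩ => ?_⟩ <;>
    · obtain ⟨X, Y, Z, W, rfl⟩ := length_eq_four.mp (by simpa using hlen)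
      refine ⟨[Y, X, W, Z], ⟨rfl, ?_⟩, (Perm.swap _ _ _).trans (((Perm.swap _ _ _).cons _).cons _),
        fun i => not_iff_not.mp ?_⟩
      all_goals
        simp only [SameOrder, not_hasInv_iff, zip_cons_cons, zip_nil_right, pairwise_cons,
          Pairwise.nil, mem_cons, not_mem_nil, forall_eq_or_imp] at hx ⊢
        grind

lemma transfers_of_hypoCong {n : ℕ} {u v : List ℕ} (h : HypoCong n u v) :
    Transfers u v ∧ Transfers v u := by
  induction h with
  | of h => exact transfers_of_hypoRel h
  | refl u => exact ⟨.refl u, .refl u⟩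
  | symm _ ih => exact ih.symm
  | trans _ _ ih₁ ih₂ => exact ⟨ih₁.1.trans ih₂.1, ih₂.2.trans ih₁.2⟩
  | append _ _ ih₁ ih₂ => exact ⟨ih₁.1.append ih₂.1, ih₁.2.append ih₂.2⟩

theorem hypoCong_implies_sim_general (n : ℕ) (u v : List ℕ)
    (h : HypoCong n u v) : Sim n u v := by
  obtain ⟨huv, hvu⟩ := transfers_of_hypoCong h
  exact sim_of_transfers huv hvu

/-- For all `u, v ∈ 𝒜_n^*`, if `u ≡_hypo v` then `u ∼ v`. -/
theorem hypoCong_implies_sim (n : ℕ) (u v : List ℕ) (hu : IsWord n u) (hv : IsWord n v)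
    (h : HypoCong n u v) : Sim n u v :=
  hypoCong_implies_sim_general n u v h

end HypoCrystal
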